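/- Let n and i be positive integers with i < n, let d = gcd(n, i), and let S = {J_n^i, (J_nᵀ)^{n−i}} ⊆ M_n(ℂ). For each k ≥ 0 let L_k(S) denote the ℂ-linear span of all products of at most k elements of S, including the empty product (the identity matrix). Then the least k such that L_k(S) = L_{k+1}(S) equals 2(n/d) − 2; that is, l(S) = 2n/d − 2. -/

import Mathlib

open Matrix

/-- The `n × n` nilpotent Jordan block over `ℂ`. -/
def jordan (n : ℕ) : Matrix (Fin n) (Fin n) ℂ :=
  Matrix.of fun a b => if (a : ℕ) + 1 = (b : ℕ) then 1 else 0

/-- `L_k(S)`: the ℂ-linear span of all words in `S` of length at most `k`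
(including the empty word, the identity matrix). -/
noncomputable def wordSpan (n k : ℕ) (S : Set (Matrix (Fin n) (Fin n) ℂ)) :
    Submodule ℂ (Matrix (Fin n) (Fin n) ℂ) :=
  Submodule.span ℂ {M | ∃ w : List (Matrix (Fin n) (Fin n) ℂ),
    w.length ≤ k ∧ (∀ x ∈ w, x ∈ S) ∧ M = w.prod}


/-!
Write `n = m d` and `i = u d`, so that `gcd(u, m) = 1`. Indexing `Fin n` by `Fin m × Fin d`, the
two generators become `A ⊗ 1_d` for the letters `J_m^u` and `(J_mᵀ)^(m-u)`, so it suffices to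
treat `m`.

On `Fin m`, exactly one letter is nonzero on each row `a`, and it sends `a` to `a + u mod m`. The
product of a word `w` of length `L` is therefore the partial permutation `a ↦ a + L u mod m`,
restricted to the rows whose orbit `a, a + u, a + 2u, …` is coded by `w`. Codes of length `m - 1`
determine the row (they record the quotients `⌊(a + t u) / m⌋`), so words of length at least `m - 1`
are matrix units depending on `L` only modulo `m`, whence `L_{2m-1} = L_{2m-2}`. Conversely, the
rows `u - 1` and `u` have the same code up to length `m - 2`; this gives, for each `k < 2m - 2`, a
linear functional vanishing on `L_k` but not on `L_{k+1}`.
-/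

/-- Letter `true` stands for `J_m^u` and `false` for `(J_mᵀ)^(m-u)`: the `t`-th letter is the one
not vanishing on row `(a + t u) % m`. -/
def rotationCode (m u a L : ℕ) : List Bool :=
  (List.range L).map fun t => decide ((a + t * u) % m + u < m)

section RotationCode

variable {m u : ℕ}

@[simp]
theorem rotationCode_length (a L : ℕ) : (rotationCode m u a L).length = L := by
  simp [rotationCode]

@[simp]
theorem rotationCode_zero (a : ℕ) : rotationCode m u a 0 = [] := rfl

theorem rotationCode_succ (a L : ℕ) :
    rotationCode m u a (L + 1) = decide (a % m + u < m) :: rotationCode m u (a + u) L := by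
  simp only [rotationCode, List.range_succ_eq_map, List.map_cons, List.map_map]
  congr 2
  · simp
  · funext t; simp [add_mul, add_assoc, add_comm u]

theorem rotationCode_mod (a L : ℕ) : rotationCode m u (a % m) L = rotationCode m u a L := by
  simp [rotationCode]

theorem add_mul_mod_eq_iff (hco : Nat.Coprime u m) (a L L' : ℕ) :
    (a + L * u) % m = (a + L' * u) % m ↔ L % m = L' % m :=
  ⟨fun h => (Nat.ModEq.add_left_cancel' a h).cancel_right_of_coprime hco.symm,
    fun h => (Nat.ModEq.mul_right u h).add_left a⟩

theorem exists_add_mul_mod_eq (hco : Nat.Coprime u m) (a : ℕ) {b : ℕ} (hb : b < m) :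
    ∃ t < m, (a + t * u) % m = b := by
  let f : Fin m → Fin m := fun t => ⟨(a + t * u) % m, Nat.mod_lt _ t.pos⟩
  have hf : f.Injective := fun t t' h => Fin.ext <| by
    simpa [Nat.mod_eq_of_lt t.2, Nat.mod_eq_of_lt t'.2] using
      (add_mul_mod_eq_iff hco a t t').1 (congrArg Fin.val h)
  obtain ⟨t, ht⟩ := Finite.surjective_of_injective hf ⟨b, hb⟩
  exact ⟨t, t.2, congrArg Fin.val ht⟩

theorem add_succ_mul_div (hum : u < m) (a t : ℕ) :
    (a + (t + 1) * u) / m = (a + t * u) / m + if (a + t * u) % m + u < m then 0 else 1 := by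
  rw [show a + (t + 1) * u = a + t * u + u by ring, Nat.add_div (by omega), Nat.div_eq_of_lt hum,
    Nat.mod_eq_of_lt hum]
  split_ifs <;> omega

theorem rotationCode_eq_iff (hum : u < m) {a a' : ℕ} (h : a / m = a' / m) (L : ℕ) :
    rotationCode m u a L = rotationCode m u a' L ↔
      ∀ t ≤ L, (a + t * u) / m = (a' + t * u) / m := by
  induction L with
  | zero => simp [rotationCode, h]
  | succ L ih =>
    simp only [rotationCode, List.range_succ, List.map_append, List.map_cons, List.map_nil] at ih ⊢
    rw [List.append_singleton_inj, ih]
    constructor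
    · rintro ⟨hle, hbit⟩ t ht
      rcases Nat.lt_or_eq_of_le ht with ht | rfl
      · exact hle t (by omega)
      · rw [add_succ_mul_div hum, add_succ_mul_div hum, hle L le_rfl]
        simp only [decide_eq_decide.1 hbit]
    · intro hall
      have hlast := hall (L + 1) le_rfl
      rw [add_succ_mul_div hum, add_succ_mul_div hum, hall L (by omega)] at hlast
      refine ⟨fun t ht => hall t (by omega), decide_eq_decide.2 ?_⟩
      split_ifs at hlast <;> omega

theorem rotationCode_ne_of_lt (hco : Nat.Coprime u m) (hum : u < m) {a a' L : ℕ} (haa' : a < a')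
    (ha' : a' < m) (hL : m - 1 ≤ L) : rotationCode m u a L ≠ rotationCode m u a' L := by
  -- at a time `t < m` with `m ∣ a' + t u`, the orbit of `a` is just below that multiple of `m`
  intro h
  obtain ⟨t, htm, ht⟩ := exists_add_mul_mod_eq hco a' (b := 0) (by omega)
  have ht0 : t ≠ 0 := by
    rintro rfl
    rw [zero_mul, add_zero, Nat.mod_eq_of_lt ha'] at ht
    omega
  have hfloor := (rotationCode_eq_iff hum (by rw [Nat.div_eq_of_lt (by omega),
    Nat.div_eq_of_lt ha']) L).1 h t (by omega)
  have hq : (a' + t * u) / m * m = a' + t * u := Nat.div_mul_cancel (Nat.dvd_of_mod_eq_zero ht)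
  have hlt : (a + t * u) / m < (a' + t * u) / m := (Nat.div_lt_iff_lt_mul (by omega)).2 (by omega)
  omega

theorem rotationCode_inj (hco : Nat.Coprime u m) (hum : u < m) {a a' L : ℕ} (ha : a < m)
    (ha' : a' < m) (hL : m - 1 ≤ L) : rotationCode m u a L = rotationCode m u a' L ↔ a = a' := by
  refine ⟨fun h => ?_, fun h => h ▸ rfl⟩
  rcases lt_trichotomy a a' with hlt | heq | hgt
  · exact absurd h (rotationCode_ne_of_lt hco hum hlt ha' hL)
  · exact heq
  · exact absurd h.symm (rotationCode_ne_of_lt hco hum hgt ha hL)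

theorem rotationCode_pred_eq (hco : Nat.Coprime u m) (hu : 0 < u) (hum : u < m) {L : ℕ}
    (hL : L ≤ m - 2) : rotationCode m u (u - 1) L = rotationCode m u u L := by
  rw [rotationCode_eq_iff hum (by rw [Nat.div_eq_of_lt (by omega), Nat.div_eq_of_lt hum])]
  intro t ht
  have hndvd : (u + t * u) % m ≠ 0 := by
    intro h
    have ht1 := (add_mul_mod_eq_iff hco 0 (t + 1) 0).1 (by simpa [add_mul, add_comm] using h)
    rw [Nat.zero_mod, Nat.mod_eq_of_lt (by omega)] at ht1
    omega
  rw [show u - 1 + t * u = u + t * u - 1 by omega]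
  generalize u + t * u = y at hndvd ⊢
  have hsplit := Nat.div_add_mod y m
  have hmod := Nat.mod_lt y (show 0 < m by omega)
  apply Nat.div_eq_of_lt_le
  · rw [mul_comm]; omega
  · rw [add_mul, one_mul, mul_comm]; omega

end RotationCode

def wordMatrix (m u : ℕ) (w : List Bool) : Matrix (Fin m) (Fin m) ℂ :=
  of fun a b => if rotationCode m u a w.length = w ∧ (a + w.length * u) % m = b then 1 else 0

section WordMatrix

variable {m u : ℕ}

theorem wordMatrix_cons (b : Bool) (w : List Bool) :
    wordMatrix m u (b :: w) = wordMatrix m u [b] * wordMatrix m u w := by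
  ext a c
  rw [mul_apply, Finset.sum_eq_single ⟨(a + u) % m, Nat.mod_lt _ a.pos⟩]
  · simp only [wordMatrix, List.length_cons, rotationCode_succ, List.cons.injEq, of_apply,
      List.length_nil, zero_add, rotationCode_zero, and_true, one_mul, rotationCode_mod,
      Nat.mod_add_mod, mul_ite, mul_one, mul_zero]
    rw [show (a : ℕ) + (w.length + 1) * u = a + u + w.length * u by ring]
    split_ifs <;> tauto
  · intro x _ hx
    simp only [wordMatrix, of_apply, mul_ite, mul_one, mul_zero, ite_eq_right_iff, one_ne_zero]
    exact fun _ h => hx (Fin.ext (by simpa using h.2.symm))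
  · simp

theorem prod_map_wordMatrix_singleton (w : List Bool) :
    (w.map fun b => wordMatrix m u [b]).prod = wordMatrix m u w := by
  induction w with
  | nil =>
    ext a b
    simp [wordMatrix, one_apply, Fin.ext_iff, Nat.mod_eq_of_lt a.2]
  | cons b w ih => rw [List.map_cons, List.prod_cons, ih, ← wordMatrix_cons]

theorem wordMatrix_rotationCode (hco : Nat.Coprime u m) (hum : u < m) {L : ℕ} (hL : m - 1 ≤ L)
    (a : Fin m) :
    wordMatrix m u (rotationCode m u a L) = single a ⟨(a + L * u) % m, Nat.mod_lt _ a.pos⟩ 1 := by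
  ext x y
  simp only [wordMatrix, of_apply, single_apply, rotationCode_length,
    rotationCode_inj hco hum x.2 a.2 hL, Fin.ext_iff]
  by_cases h : (x : ℕ) = a
  · simp [h]
  · simp [h, Ne.symm h]

end WordMatrix

noncomputable def wordMatrixSpan (m u k : ℕ) : Submodule ℂ (Matrix (Fin m) (Fin m) ℂ) :=
  Submodule.span ℂ (wordMatrix m u '' {w | w.length ≤ k})

section WordMatrixSpan

variable {m u : ℕ}

theorem wordMatrixSpan_mono {k k' : ℕ} (h : k ≤ k') :
    wordMatrixSpan m u k ≤ wordMatrixSpan m u k' :=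
  Submodule.span_mono <| Set.image_mono fun _ hw => le_trans hw h

theorem wordMatrixSpan_ne_succ_of_separating (φ : Matrix (Fin m) (Fin m) ℂ →ₗ[ℂ] ℂ) {k : ℕ}
    (hφ : ∀ w : List Bool, w.length ≤ k → φ (wordMatrix m u w) = 0) {w₀ : List Bool}
    (hw₀ : w₀.length = k + 1) (hφw₀ : φ (wordMatrix m u w₀) ≠ 0) :
    wordMatrixSpan m u k ≠ wordMatrixSpan m u (k + 1) := by
  intro heq
  have hle : wordMatrixSpan m u k ≤ LinearMap.ker φ :=
    Submodule.span_le.2 <| by rintro _ ⟨w, hw, rfl⟩; exact hφ w hw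
  have hmem : wordMatrix m u w₀ ∈ wordMatrixSpan m u k :=
    heq ▸ Submodule.subset_span ⟨w₀, hw₀.le, rfl⟩
  exact hφw₀ (hle hmem)

theorem wordMatrixSpan_succ_le (hco : Nat.Coprime u m) (hum : u < m) :
    wordMatrixSpan m u (2 * m - 1) ≤ wordMatrixSpan m u (2 * m - 2) := by
  refine Submodule.span_le.2 ?_
  rintro _ ⟨w, hw : w.length ≤ 2 * m - 1, rfl⟩
  rcases Nat.lt_or_eq_of_le hw with hw | hw
  · exact Submodule.subset_span ⟨w, show w.length ≤ 2 * m - 2 by omega, rfl⟩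
  by_cases hcode : ∃ a : Fin m, rotationCode m u a (2 * m - 1) = w
  · obtain ⟨a, rfl⟩ := hcode
    have hshift : wordMatrix m u (rotationCode m u a (2 * m - 1)) =
        wordMatrix m u (rotationCode m u a (m - 1)) := by
      rw [wordMatrix_rotationCode hco hum (by omega), wordMatrix_rotationCode hco hum le_rfl]
      congr 2
      rw [add_mul_mod_eq_iff hco, show 2 * m - 1 = m - 1 + m by omega, Nat.add_mod_right]
    rw [hshift]
    exact Submodule.subset_span ⟨_, show _ ≤ 2 * m - 2 by rw [rotationCode_length]; omega, rfl⟩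
  · have hzero : wordMatrix m u w = 0 := by
      ext a b
      simp only [wordMatrix, of_apply, Matrix.zero_apply, ite_eq_right_iff, one_ne_zero]
      exact fun h => hcode ⟨a, hw ▸ h.1⟩
    rw [hzero]
    exact zero_mem _

theorem wordMatrixSpan_ne_succ_of_lt (hco : Nat.Coprime u m) {k : ℕ} (hk : k + 1 < m) :
    wordMatrixSpan m u k ≠ wordMatrixSpan m u (k + 1) := by
  let a : Fin m := ⟨0, by omega⟩
  refine wordMatrixSpan_ne_succ_of_separating
    (entryLinearMap ℂ ℂ a ⟨(a + (k + 1) * u) % m, Nat.mod_lt _ a.pos⟩) (fun w hw => ?_)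
    (w₀ := rotationCode m u a (k + 1)) (rotationCode_length _ _) ?_
  · simp only [entryLinearMap_apply, wordMatrix, of_apply, ite_eq_right_iff, one_ne_zero]
    rintro ⟨-, h⟩
    rw [add_mul_mod_eq_iff hco, Nat.mod_eq_of_lt (by omega), Nat.mod_eq_of_lt hk] at h
    omega
  · simp [wordMatrix]

theorem wordMatrixSpan_ne_succ_of_le (hco : Nat.Coprime u m) (hu : 0 < u) (hum : u < m) {k : ℕ}
    (hmk : m ≤ k + 1) (hk : k + 1 ≤ 2 * m - 2) :
    wordMatrixSpan m u k ≠ wordMatrixSpan m u (k + 1) := by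
  -- a word of length `≤ k` reaches both entries of `φ` only if its length is `k + 1 - m ≤ m - 2`,
  -- and then the codes of `u - 1` and `u` agree
  let a₁ : Fin m := ⟨u - 1, by omega⟩
  let a₂ : Fin m := ⟨u, hum⟩
  let target (a : Fin m) : Fin m := ⟨(a + (k + 1) * u) % m, Nat.mod_lt _ a.pos⟩
  let φ := entryLinearMap ℂ ℂ a₁ (target a₁) - entryLinearMap ℂ ℂ a₂ (target a₂)
  refine wordMatrixSpan_ne_succ_of_separating φ (fun w hw => ?_)
    (w₀ := rotationCode m u a₁ (k + 1)) (rotationCode_length _ _) ?_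
  · have hcode (h : w.length % m = (k + 1) % m) :
        rotationCode m u a₁ w.length = rotationCode m u a₂ w.length := by
      have hk1 : (k + 1) % m = k + 1 - m := by
        rw [Nat.mod_eq_sub_mod hmk, Nat.mod_eq_of_lt (by omega)]
      refine rotationCode_pred_eq hco hu hum ?_
      rcases lt_or_ge w.length m with hl | hl
      · rw [Nat.mod_eq_of_lt hl, hk1] at h
        omega
      · rw [Nat.mod_eq_sub_mod hl, Nat.mod_eq_of_lt (by omega), hk1] at h
        omega
    simp only [φ, target, LinearMap.sub_apply, entryLinearMap_apply, wordMatrix, of_apply,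
      add_mul_mod_eq_iff hco]
    by_cases h : w.length % m = (k + 1) % m
    · simp [h, hcode h]
    · simp [h]
  · simp only [φ, target, LinearMap.sub_apply, entryLinearMap_apply, wordMatrix, of_apply,
      rotationCode_length, rotationCode_inj hco hum a₂.2 a₁.2 (by omega : m - 1 ≤ k + 1)]
    simp [a₁, a₂, show u ≠ u - 1 by omega]

theorem isLeast_wordMatrixSpan_eq_succ (hco : Nat.Coprime u m) (hu : 0 < u) (hum : u < m) :
    IsLeast {k | wordMatrixSpan m u k = wordMatrixSpan m u (k + 1)} (2 * m - 2) := by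
  refine ⟨le_antisymm (wordMatrixSpan_mono (by omega)) ?_, fun k hk => ?_⟩
  · rw [show 2 * m - 2 + 1 = 2 * m - 1 by omega]
    exact wordMatrixSpan_succ_le hco hum
  · by_contra! hlt
    rcases lt_or_ge (k + 1) m with h | h
    · exact wordMatrixSpan_ne_succ_of_lt hco h hk
    · exact wordMatrixSpan_ne_succ_of_le hco hu hum h (by omega) hk

end WordMatrixSpan

theorem wordSpan_range {n : ℕ} {ι : Type*} (g : ι → Matrix (Fin n) (Fin n) ℂ) (k : ℕ) :
    wordSpan n k (Set.range g) =
      Submodule.span ℂ ((fun w : List ι => (w.map g).prod) '' {w | w.length ≤ k}) := by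
  unfold wordSpan
  congr 1
  ext M
  constructor
  · rintro ⟨l, hl, hmem, rfl⟩
    obtain ⟨w, rfl⟩ : l ∈ Set.range (List.map g) := Set.range_list_map g ▸ hmem
    exact ⟨w, by simpa using hl, rfl⟩
  · rintro ⟨w, hw, rfl⟩
    exact ⟨w.map g, by simpa using hw, by simp, rfl⟩

theorem jordan_pow_apply (n k : ℕ) (a b : Fin n) :
    (jordan n ^ k) a b = if (a : ℕ) + k = b then 1 else 0 := by
  induction k generalizing b with
  | zero => simp [one_apply, Fin.ext_iff]
  | succ k ih =>
    rw [pow_succ, mul_apply]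
    simp only [ih]
    simp only [jordan, of_apply, ite_mul, one_mul, zero_mul]
    rw [Fin.sum_univ_eq_sum_range (fun x => if (a : ℕ) + k = x then if x + 1 = (b : ℕ) then
      (1 : ℂ) else 0 else 0), Finset.sum_ite_eq]
    simp only [Finset.mem_range]
    have hb := b.isLt
    split_ifs <;> first | rfl | (exfalso; omega)

theorem add_mul_eq_add_mul_iff {d r s x y : ℕ} (hr : r < d) (hs : s < d) :
    r + d * x = s + d * y ↔ r = s ∧ x = y := by
  refine ⟨fun h => ?_, by rintro ⟨rfl, rfl⟩; rfl⟩
  have hmod := congrArg (· % d) h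
  have hdiv := congrArg (· / d) h
  simp only [Nat.add_mul_mod_self_left, Nat.mod_eq_of_lt hr, Nat.mod_eq_of_lt hs] at hmod
  simp only [Nat.add_mul_div_left _ _ (by omega : 0 < d), Nat.div_eq_of_lt hr,
    Nat.div_eq_of_lt hs] at hdiv
  omega

open scoped Kronecker in
/-- `A ↦ A ⊗ 1_d`, where `(x, r) : Fin m × Fin d` is the index `r + d x` of `Fin (m * d)`. -/
noncomputable def ampliation (m d : ℕ) :
    Matrix (Fin m) (Fin m) ℂ →ₐ[ℂ] Matrix (Fin (m * d)) (Fin (m * d)) ℂ :=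
  (reindexAlgEquiv ℂ ℂ finProdFinEquiv).toAlgHom.comp
    { toFun := fun A => A ⊗ₖ (1 : Matrix (Fin d) (Fin d) ℂ)
      map_one' := one_kronecker_one
      map_mul' := fun A B => by rw [← mul_kronecker_mul, one_mul]
      map_zero' := zero_kronecker _
      map_add' := fun A B => add_kronecker A B _
      commutes' := fun c => by simp [Algebra.algebraMap_eq_smul_one, smul_kronecker] }

theorem ampliation_apply {m d : ℕ} (A : Matrix (Fin m) (Fin m) ℂ) (x y : Fin m) (r s : Fin d) :
    ampliation m d A (finProdFinEquiv (x, r)) (finProdFinEquiv (y, s)) =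
      if r = s then A x y else 0 := by
  simp [ampliation, one_apply]

theorem ampliation_injective {m d : ℕ} (hd : 0 < d) : Function.Injective (ampliation m d) := by
  intro A B h
  ext x y
  simpa [ampliation_apply] using
    congrFun₂ h (finProdFinEquiv (x, ⟨0, hd⟩)) (finProdFinEquiv (y, ⟨0, hd⟩))

theorem ampliation_wordMatrix_true {m d u : ℕ} :
    ampliation m d (wordMatrix m u [true]) = jordan (m * d) ^ (u * d) := by
  ext a b
  obtain ⟨⟨x, r⟩, rfl⟩ := finProdFinEquiv.surjective a
  obtain ⟨⟨y, s⟩, rfl⟩ := finProdFinEquiv.surjective b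
  rw [ampliation_apply, jordan_pow_apply]
  have hxy : (x : ℕ) % m + u < m ∧ (x + u) % m = y ↔ x + u = y := by
    rw [Nat.mod_eq_of_lt x.2]
    exact ⟨fun h => (Nat.mod_eq_of_lt h.1).symm.trans h.2,
      fun h => ⟨h ▸ y.2, by rw [h, Nat.mod_eq_of_lt y.2]⟩⟩
  have hrxsy : (r : ℕ) + d * x + u * d = s + d * y ↔ (r : ℕ) = s ∧ (x : ℕ) + u = y := by
    rw [show (r : ℕ) + d * x + u * d = r + d * (x + u) by ring, add_mul_eq_add_mul_iff r.2 s.2]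
  simp [wordMatrix, rotationCode, hxy, hrxsy, Fin.ext_iff, ← ite_and]

theorem ampliation_wordMatrix_false {m d u : ℕ} (hum : u ≤ m) :
    ampliation m d (wordMatrix m u [false]) = (jordan (m * d))ᵀ ^ (m * d - u * d) := by
  ext a b
  obtain ⟨⟨x, r⟩, rfl⟩ := finProdFinEquiv.surjective a
  obtain ⟨⟨y, s⟩, rfl⟩ := finProdFinEquiv.surjective b
  rw [ampliation_apply, ← transpose_pow, transpose_apply, jordan_pow_apply]
  have hxy : m ≤ (x : ℕ) % m + u ∧ (x + u) % m = y ↔ (y : ℕ) + (m - u) = x := by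
    have hwrap {z : ℕ} (hz : m ≤ z) (hz' : z < 2 * m) : z % m = z - m := by
      rw [Nat.mod_eq_sub_mod hz, Nat.mod_eq_of_lt (by omega)]
    rw [Nat.mod_eq_of_lt x.2]
    constructor
    · rintro ⟨h1, h2⟩
      rw [hwrap (by omega) (by omega)] at h2
      omega
    · intro h
      refine ⟨by omega, ?_⟩
      rw [hwrap (by omega) (by omega)]
      omega
  have hrxsy : (s : ℕ) + d * y + (m * d - u * d) = r + d * x ↔
      (r : ℕ) = s ∧ (y : ℕ) + (m - u) = x := by
    rw [← Nat.sub_mul, show (s : ℕ) + d * y + (m - u) * d = s + d * (y + (m - u)) by ring,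
      add_mul_eq_add_mul_iff s.2 r.2, @eq_comm _ (s : ℕ)]
  simp [wordMatrix, rotationCode, hxy, hrxsy, Fin.ext_iff, ← ite_and]

theorem wordSpan_ampliation {m d u : ℕ} (k : ℕ) :
    wordSpan (m * d) k (Set.range fun b => ampliation m d (wordMatrix m u [b])) =
      (wordMatrixSpan m u k).map (ampliation m d).toLinearMap := by
  rw [wordSpan_range, wordMatrixSpan, Submodule.map_span, Set.image_image]
  congr 1
  refine Set.image_congr fun w _ => ?_
  rw [AlgHom.toLinearMap_apply, ← prod_map_wordMatrix_singleton, map_list_prod, List.map_map]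
  rfl

/-- For `0 < i < n` and `d = gcd(n, i)`, the least `k` with `L_k(S) = L_{k+1}(S)` for
`S = {J_n^i, (J_nᵀ)^{n-i}}` equals `2(n/d) - 2`; that is, `l(S) = 2n/d - 2`. -/
theorem stmt_19 (n i : ℕ) (hi : 0 < i) (hin : i < n) (d : ℕ) (hd : d = Nat.gcd n i) :
    let S : Set (Matrix (Fin n) (Fin n) ℂ) := {jordan n ^ i, (jordan n)ᵀ ^ (n - i)}
    sInf {k | wordSpan n k S = wordSpan n (k + 1) S} = 2 * (n / d) - 2 := by
  intro S
  have hd0 : 0 < d := hd ▸ Nat.gcd_pos_of_pos_right n hi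
  obtain ⟨m, rfl⟩ := exists_eq_mul_left_of_dvd (hd ▸ Nat.gcd_dvd_left _ _ : d ∣ n)
  obtain ⟨u, rfl⟩ := exists_eq_mul_left_of_dvd (hd ▸ Nat.gcd_dvd_right _ _ : d ∣ i)
  have hco : Nat.Coprime u m := by
    rw [Nat.gcd_mul_right, eq_comm, Nat.mul_eq_right hd0.ne'] at hd
    exact Nat.coprime_comm.1 hd
  have hu : 0 < u := Nat.pos_of_mul_pos_right hi
  have hum : u < m := Nat.lt_of_mul_lt_mul_right hin
  have hS : S = Set.range fun b => ampliation m d (wordMatrix m u [b]) := by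
    ext M
    simp [S, ampliation_wordMatrix_true, ampliation_wordMatrix_false hum.le, or_comm]
  have hset : {k | wordSpan (m * d) k S = wordSpan (m * d) (k + 1) S} =
      {k | wordMatrixSpan m u k = wordMatrixSpan m u (k + 1)} := by
    ext k
    simp only [hS, wordSpan_ampliation, Set.mem_ofPred_eq]
    exact (Submodule.map_injective_of_injective (ampliation_injective hd0)).eq_iff
  rw [hset, Nat.mul_div_cancel _ hd0]
  exact (isLeast_wordMatrixSpan_eq_succ hco hu hum).csInf_eq
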